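/- (Case 112+113 with d_2 = d_1.) Let z_1, z_2, z_3 form a nondegenerate triangle and 0 < d_1 = d_2 < d_3. For k ∈ [1, d_3/d_2) define F(k) = ‖b_23(k) − b_13(k)‖ − (r_23(k) + r_13(k)), where b_ij(k), r_ij(k) are the Apollonius center and radius for segment z_i z_3 with ratio k d_i : d_3 (i = 1, 2). If F(1) > 0, then there exists k ∈ (1, d_3/d_2) with F(k) = 0, i.e., the two Apollonius circles are externally tangent, yielding a point x with ‖x − z_i‖ d_3 = ‖x − z_3‖ k d_i for i = 1, 2. -/

import Mathlib

/-!
Put `d = d₁ = d₂` and `t = k d / d₃`. The paper's centres and radii are those of the Apollonius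
circles `{x | ‖x - zᵢ‖ = t ‖x - z₃‖}`, and the two centres differ by `(z₂ - z₁) / (1 - t²)`, so for
`0 ≤ t < 1`
  `F k = (‖z₂ - z₁‖ - t (‖z₂ - z₃‖ + ‖z₁ - z₃‖)) / (1 - t²)`.
Hence `F` vanishes exactly at `t₀ = ‖z₂ - z₁‖ / (‖z₂ - z₃‖ + ‖z₁ - z₃‖)`, which is `< 1` by the
strict triangle inequality and `> d / d₃` because `F 1 > 0`. At `t₀` the circles are externally
tangent, and the point of tangency lies on both Apollonius circles.
-/

theorem dist_lt_dist_add_dist_of_affineIndependent {V P : Type*} [NormedAddCommGroup V]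
    [NormedSpace ℝ V] [StrictConvexSpace ℝ V] [MetricSpace P] [NormedAddTorsor V P] {p₁ p₂ p₃ : P}
    (h : AffineIndependent ℝ ![p₁, p₂, p₃]) : dist p₁ p₂ < dist p₁ p₃ + dist p₃ p₂ := by
  refine dist_lt_dist_add_dist_iff.mpr fun hbtw => ?_
  refine affineIndependent_iff_not_collinear_set.mp h ?_
  simpa [Set.pair_comm] using hbtw.collinear

section NormedSpace

variable {E : Type*} [NormedAddCommGroup E]

/-- For `0 ≤ t < 1`, `apolloniusCenter t u v` and `apolloniusRadius t u v` are the centre and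
radius of the Apollonius circle `{x | ‖x - u‖ = t * ‖x - v‖}`. -/
noncomputable def apolloniusRadius (t : ℝ) (u v : E) : ℝ := t * ‖u - v‖ / (1 - t ^ 2)

theorem apolloniusRadius_div (a e : ℝ) (he : e ≠ 0) (u v : E) :
    apolloniusRadius (a / e) u v = a * e * ‖u - v‖ / (e ^ 2 - a ^ 2) := by
  rw [apolloniusRadius, div_pow, one_sub_div (pow_ne_zero 2 he), div_div_eq_mul_div]
  congr 1
  field_simp

theorem apolloniusRadius_nonneg {t : ℝ} (ht₀ : 0 ≤ t) (ht₁ : t ≤ 1) (u v : E) :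
    0 ≤ apolloniusRadius t u v :=
  div_nonneg (by positivity) (by nlinarith)

variable [NormedSpace ℝ E]

theorem exists_norm_sub_eq_of_norm_sub_eq_add {b₁ b₂ : E} {r₁ r₂ : ℝ} (hr₁ : 0 ≤ r₁) (hr₂ : 0 ≤ r₂)
    (h : ‖b₂ - b₁‖ = r₁ + r₂) : ∃ x, ‖x - b₁‖ = r₁ ∧ ‖x - b₂‖ = r₂ := by
  rcases (add_nonneg hr₁ hr₂).eq_or_lt with hr | hr
  · exact ⟨b₁, by simp; linarith, by rw [norm_sub_rev, h]; linarith⟩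
  refine ⟨AffineMap.lineMap b₁ b₂ (r₁ / (r₁ + r₂)), ?_, ?_⟩
  · rw [← dist_eq_norm, dist_lineMap_left, dist_eq_norm', h, Real.norm_of_nonneg (by positivity),
      div_mul_cancel₀ _ hr.ne']
  · rw [← dist_eq_norm, dist_lineMap_right, dist_eq_norm', h, Real.norm_of_nonneg (by
      rw [sub_nonneg, div_le_one hr]; linarith)]
    field_simp
    ring

noncomputable def apolloniusCenter (t : ℝ) (u v : E) : E := (1 - t ^ 2)⁻¹ • (u - t ^ 2 • v)

noncomputable def apolloniusGap (t : ℝ) (u v w : E) : ℝ :=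
  ‖apolloniusCenter t u w - apolloniusCenter t v w‖
    - (apolloniusRadius t u w + apolloniusRadius t v w)

theorem smul_apolloniusCenter {t : ℝ} (hs : 1 - t ^ 2 ≠ 0) (u v : E) :
    (1 - t ^ 2) • apolloniusCenter t u v = u - t ^ 2 • v :=
  smul_inv_smul₀ hs _

theorem apolloniusCenter_sub_apolloniusCenter (t : ℝ) (u v w : E) :
    apolloniusCenter t u w - apolloniusCenter t v w = (1 - t ^ 2)⁻¹ • (u - v) := by
  rw [apolloniusCenter, apolloniusCenter, ← smul_sub, sub_sub_sub_cancel_right]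

theorem apolloniusCenter_div (a e : ℝ) (he : e ≠ 0) (u v : E) :
    apolloniusCenter (a / e) u v
      = (e ^ 2 / (e ^ 2 - a ^ 2)) • u + (a ^ 2 / (a ^ 2 - e ^ 2)) • v := by
  rw [apolloniusCenter, div_pow, one_sub_div (pow_ne_zero 2 he), inv_div, smul_sub, smul_smul,
    div_mul_div_comm, mul_comm (e ^ 2), mul_div_mul_right _ _ (pow_ne_zero 2 he), ← neg_sub (e ^ 2),
    div_neg, neg_smul, ← sub_eq_add_neg]

theorem apolloniusGap_eq {t : ℝ} (ht₀ : 0 ≤ t) (ht₁ : t < 1) (u v w : E) :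
    apolloniusGap t u v w = (‖u - v‖ - t * (‖u - w‖ + ‖v - w‖)) / (1 - t ^ 2) := by
  have hs : 0 < 1 - t ^ 2 := by nlinarith
  rw [apolloniusGap, apolloniusCenter_sub_apolloniusCenter, norm_smul,
    Real.norm_of_nonneg (inv_nonneg.2 hs.le), apolloniusRadius, apolloniusRadius]
  field_simp

theorem apolloniusGap_div_eq_zero {u v w : E} (h : ‖u - v‖ < ‖u - w‖ + ‖v - w‖) :
    apolloniusGap (‖u - v‖ / (‖u - w‖ + ‖v - w‖)) u v w = 0 := by
  have hs : 0 < ‖u - w‖ + ‖v - w‖ := (norm_nonneg _).trans_lt h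
  rw [apolloniusGap_eq (by positivity) ((div_lt_one hs).mpr h), div_mul_cancel₀ _ hs.ne',
    sub_self, zero_div]

theorem lt_div_of_apolloniusGap_pos {t : ℝ} (ht₀ : 0 ≤ t) (ht₁ : t < 1) {u v w : E}
    (h : 0 < apolloniusGap t u v w) : t < ‖u - v‖ / (‖u - w‖ + ‖v - w‖) := by
  rw [apolloniusGap_eq ht₀ ht₁, div_pos_iff_of_pos_right (by nlinarith), sub_pos] at h
  have hs : 0 < ‖u - w‖ + ‖v - w‖ := by
    linarith [norm_sub_le_norm_sub_add_norm_sub u w v, norm_sub_rev w v,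
      mul_nonneg ht₀ (add_nonneg (norm_nonneg (u - w)) (norm_nonneg (v - w)))]
  exact (lt_div_iff₀ hs).mpr h

end NormedSpace

section InnerProductSpace

variable {E : Type*} [NormedAddCommGroup E] [InnerProductSpace ℝ E]

theorem apollonius_identity {t : ℝ} (ht : t ^ 2 ≠ 1) (u v x : E) :
    (1 - t ^ 2) * (‖x - u‖ ^ 2 - t ^ 2 * ‖x - v‖ ^ 2)
      = (1 - t ^ 2) ^ 2 * ‖x - apolloniusCenter t u v‖ ^ 2 - t ^ 2 * ‖u - v‖ ^ 2 := by
  have hs : 1 - t ^ 2 ≠ 0 := sub_ne_zero.mpr (Ne.symm ht)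
  have hu :
      (1 - t ^ 2) • (x - u) = (1 - t ^ 2) • (x - apolloniusCenter t u v) + t ^ 2 • (u - v) := by
    rw [smul_sub _ x (apolloniusCenter t u v), smul_apolloniusCenter hs]
    module
  have hv : (1 - t ^ 2) • (x - v) = (1 - t ^ 2) • (x - apolloniusCenter t u v) + (u - v) := by
    rw [smul_sub _ x (apolloniusCenter t u v), smul_apolloniusCenter hs]
    module
  have nu := congrArg (‖·‖ ^ 2) hu
  have nv := congrArg (‖·‖ ^ 2) hv
  simp only [norm_add_sq_real, norm_smul, real_inner_smul_left, real_inner_smul_right,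
    Real.norm_eq_abs, mul_pow, sq_abs] at nu nv
  apply mul_left_cancel₀ hs
  linear_combination nu - t ^ 2 * nv

theorem norm_sub_eq_mul_norm_sub_of_norm_sub_apolloniusCenter {t : ℝ} (ht₀ : 0 ≤ t) (ht₁ : t < 1)
    {u v x : E} (hx : ‖x - apolloniusCenter t u v‖ = apolloniusRadius t u v) :
    ‖x - u‖ = t * ‖x - v‖ := by
  have hs : 0 < 1 - t ^ 2 := by nlinarith
  have h := apollonius_identity (by nlinarith : t ^ 2 ≠ 1) u v x
  rw [hx, apolloniusRadius, div_pow, mul_div_cancel₀ _ (pow_ne_zero 2 hs.ne'), mul_pow,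
    sub_self, mul_eq_zero, or_iff_right hs.ne', sub_eq_zero] at h
  rw [← sq_eq_sq₀ (norm_nonneg _) (by positivity), h, mul_pow]

theorem exists_norm_sub_eq_mul_of_apolloniusGap_eq_zero {t : ℝ} (ht₀ : 0 ≤ t) (ht₁ : t < 1)
    {u v w : E} (h : apolloniusGap t u v w = 0) :
    ∃ x, ‖x - u‖ = t * ‖x - w‖ ∧ ‖x - v‖ = t * ‖x - w‖ := by
  obtain ⟨x, hxv, hxu⟩ := exists_norm_sub_eq_of_norm_sub_eq_add
    (apolloniusRadius_nonneg ht₀ ht₁.le v w) (apolloniusRadius_nonneg ht₀ ht₁.le u w)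
    (by rw [apolloniusGap] at h; linarith)
  exact ⟨x, norm_sub_eq_mul_norm_sub_of_norm_sub_apolloniusCenter ht₀ ht₁ hxu,
    norm_sub_eq_mul_norm_sub_of_norm_sub_apolloniusCenter ht₀ ht₁ hxv⟩

end InnerProductSpace

/-- Theorem 4 of the paper: case `d₃ > d₂ = d₁` with externally disjoint
Apollonius circles. If `F(1) > 0`, there exists `k ∈ (1, d₃/d₂)` with `F(k) = 0`,
i.e. the two circles become externally tangent, yielding a solution point. -/
theorem exists_k_F_zero
    (z₁ z₂ z₃ : EuclideanSpace ℝ (Fin 2)) (d₁ d₂ d₃ : ℝ)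
    (htri : AffineIndependent ℝ ![z₁, z₂, z₃])
    (hd₁ : 0 < d₁) (h12 : d₁ = d₂) (h23 : d₂ < d₃)
    (F : ℝ → ℝ)
    (hF : ∀ k : ℝ,
      F k = ‖((d₃ ^ 2 / (d₃ ^ 2 - k ^ 2 * d₂ ^ 2)) • z₂
                + (k ^ 2 * d₂ ^ 2 / (k ^ 2 * d₂ ^ 2 - d₃ ^ 2)) • z₃)
              - ((d₃ ^ 2 / (d₃ ^ 2 - k ^ 2 * d₁ ^ 2)) • z₁
                + (k ^ 2 * d₁ ^ 2 / (k ^ 2 * d₁ ^ 2 - d₃ ^ 2)) • z₃)‖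
            - (k * d₂ * d₃ * ‖z₂ - z₃‖ / (d₃ ^ 2 - k ^ 2 * d₂ ^ 2)
                + k * d₁ * d₃ * ‖z₁ - z₃‖ / (d₃ ^ 2 - k ^ 2 * d₁ ^ 2)))
    (hF1 : 0 < F 1) :
    ∃ k : ℝ, 1 < k ∧ k < d₃ / d₂ ∧ F k = 0 ∧
      ∃ x : EuclideanSpace ℝ (Fin 2),
        ‖x - z₁‖ * d₃ = ‖x - z₃‖ * (k * d₁) ∧
        ‖x - z₂‖ * d₃ = ‖x - z₃‖ * (k * d₂) := by
  subst h12
  have hd₃ : 0 < d₃ := hd₁.trans h23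
  have hF_gap : ∀ k, F k = apolloniusGap (k * d₁ / d₃) z₂ z₁ z₃ := fun k => by
    rw [hF, apolloniusGap, apolloniusCenter_div _ _ hd₃.ne', apolloniusCenter_div _ _ hd₃.ne',
      apolloniusRadius_div _ _ hd₃.ne', apolloniusRadius_div _ _ hd₃.ne', mul_pow]
  have h_strict : ‖z₂ - z₁‖ < ‖z₂ - z₃‖ + ‖z₁ - z₃‖ := by
    have h := dist_lt_dist_add_dist_of_affineIndependent htri
    rw [dist_eq_norm, dist_eq_norm, dist_eq_norm, norm_sub_rev z₁ z₂, norm_sub_rev z₃ z₂] at h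
    linarith
  set t := ‖z₂ - z₁‖ / (‖z₂ - z₃‖ + ‖z₁ - z₃‖)
  have ht₁ : t < 1 := (div_lt_one ((norm_nonneg _).trans_lt h_strict)).mpr h_strict
  have hlt : d₁ / d₃ < t := by
    rw [hF_gap, one_mul] at hF1
    exact lt_div_of_apolloniusGap_pos (by positivity) ((div_lt_one hd₃).mpr h23) hF1
  have hkt : t * d₃ / d₁ * d₁ / d₃ = t := by field_simp
  obtain ⟨x, hx₂, hx₁⟩ := exists_norm_sub_eq_mul_of_apolloniusGap_eq_zero
    (hlt.trans' (by positivity)).le ht₁ (apolloniusGap_div_eq_zero h_strict)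
  refine ⟨t * d₃ / d₁, ?_, ?_, ?_, x, ?_, ?_⟩
  · rwa [one_lt_div hd₁, ← div_lt_iff₀ hd₃]
  · exact div_lt_div_of_pos_right (mul_lt_of_lt_one_left hd₃ ht₁) hd₁
  · rw [hF_gap, hkt, apolloniusGap_div_eq_zero h_strict]
  · rw [hx₁]; field_simp
  · rw [hx₂]; field_simp
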